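/- arXiv:1704.04083 — 2 statements merged into one kernel-verified Lean document; each statement's English description precedes it below -/
import Mathlib

section
/- For any odd prime power q, with n = (q+1)/2, and for every k with 1 ≤ k ≤ n, there exists an MDS LCD [n,k] code over F_q, i.e., a k-dimensional LCD subspace of F_q^n with minimum distance n − k + 1. -/
/-- The Euclidean dual of a code `C ⊆ R^n`:
`C^⊥ = {x : x · c = 0 for all c ∈ C}` where `x · y = ∑ i, x i * y i`. -/
def dualCode {R : Type*} [CommRing R] {n : ℕ} (C : Submodule R (Fin n → R)) :
    Submodule R (Fin n → R) where
  carrier := {x | ∀ c ∈ C, ∑ i, x i * c i = 0}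
  zero_mem' := by intro c hc; simp
  add_mem' := by
    intro a b ha hb c hc
    have h1 := ha c hc
    have h2 := hb c hc
    simp only [Pi.add_apply, add_mul, Finset.sum_add_distrib, h1, h2, add_zero]
  smul_mem' := by
    intro r x hx c hc
    have h1 := hx c hc
    simp only [Pi.smul_apply, smul_eq_mul, mul_assoc, ← Finset.mul_sum, h1, mul_zero]

/-- A code is LCD (linear complementary dual) if `C ∩ C^⊥ = {0}`. -/
def IsLCD {R : Type*} [CommRing R] {n : ℕ} (C : Submodule R (Fin n → R)) : Prop :=
  C ⊓ dualCode C = ⊥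

open Classical in
/-- The Hamming weight of a vector: the number of nonzero coordinates. -/
noncomputable def wt {R : Type*} [Zero R] {n : ℕ} (x : Fin n → R) : ℕ :=
  (Finset.univ.filter fun i => x i ≠ 0).card

/-- `C` has minimum distance `d`: some nonzero codeword has weight `d`
and every nonzero codeword has weight at least `d`. -/
def hasMinDist {F : Type*} [Field F] {n : ℕ} (C : Submodule F (Fin n → F)) (d : ℕ) : Prop :=
  (∃ c ∈ C, c ≠ 0 ∧ wt c = d) ∧ ∀ c ∈ C, c ≠ 0 → d ≤ wt c

/-!
The code is a generalized Reed–Solomon code: evaluate the polynomials of degree `< k` at `n`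
distinct points `αᵢ` and scale coordinate `i` by `wᵢ ≠ 0`. It is MDS because a nonzero polynomial
of degree `< k` has at most `k - 1` roots, and it is LCD as soon as its Gram matrix
`Vᵀ diag(wᵢ²) V` is nonsingular (`V` the `n × k` Vandermonde matrix).
The map `u ↦ det (Vᵀ diag(u) V)` is affine in each `uᵢ` and nonzero at the indicator of `k` of
the points, so once `F` has two distinct nonzero squares (`q ≥ 5`) it is nonzero at a point all of
whose coordinates are nonzero squares. The remaining cases are `k = n`, where `V` is invertible,
and `k = 1`, where the Gram matrix for `w = 1` is `n = 1/2` in `F`.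
-/

open Matrix Polynomial

def IsMultiaffine {ι R : Type*} [CommRing R] [DecidableEq ι] (f : (ι → R) → R) : Prop :=
  ∀ x j, ∃ c₀ c₁ : R, ∀ t, f (Function.update x j t) = c₀ + c₁ * t

section Multiaffine

variable {ι R : Type*} [CommRing R] [NoZeroDivisors R]

theorem exists_mem_add_mul_ne_zero {c₀ c₁ t₀ : R} (h : c₀ + c₁ * t₀ ≠ 0)
    {S : Set R} (hS : S.Nontrivial) : ∃ t ∈ S, c₀ + c₁ * t ≠ 0 := by
  obtain ⟨a, ha, b, hb, hab⟩ := hS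
  by_contra! hzero
  have hc₁ : c₁ = 0 := by
    have : c₁ * (a - b) = 0 := by linear_combination hzero a ha - hzero b hb
    exact (mul_eq_zero.1 this).resolve_right (sub_ne_zero.2 hab)
  have hc₀ : c₀ = 0 := by simpa [hc₁] using hzero a ha
  exact h (by simp [hc₀, hc₁])

theorem IsMultiaffine.exists_forall_mem_ne_zero [Fintype ι] [DecidableEq ι]
    {f : (ι → R) → R} (hf : IsMultiaffine f) {x₀ : ι → R} (hx₀ : f x₀ ≠ 0)
    {S : Set R} (hS : S.Nontrivial) : ∃ u : ι → R, (∀ i, u i ∈ S) ∧ f u ≠ 0 := by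
  suffices ∀ s : Finset ι, ∃ u : ι → R, (∀ i ∈ s, u i ∈ S) ∧ f u ≠ 0 by
    simpa using this Finset.univ
  intro s
  induction s using Finset.induction_on with
  | empty => exact ⟨x₀, by simp, hx₀⟩
  | insert j s _ ih =>
    obtain ⟨u, hu, hfu⟩ := ih
    obtain ⟨c₀, c₁, hc⟩ := hf u j
    obtain ⟨t, htS, ht⟩ :=
      exists_mem_add_mul_ne_zero (by rwa [← hc, Function.update_eq_self]) hS
    refine ⟨Function.update u j t, fun i hi => ?_, by rwa [hc]⟩
    rcases eq_or_ne i j with rfl | hij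
    · simpa using htS
    · simpa [hij] using hu i ((Finset.mem_insert.1 hi).resolve_left hij)

end Multiaffine

section GramDeterminant

variable {ι κ R : Type*} [Fintype ι] [DecidableEq ι] [CommRing R]

theorem Matrix.exists_det_add_smul_vecMulVec_eq (M : Matrix ι ι R) (v w : ι → R) :
    ∃ c₀ c₁ : R, ∀ t, (M + t • vecMulVec v w).det = c₀ + c₁ * t := by
  let f := (detRowAlternating : (ι → R) [⋀^ι]→ₗ[R] R).toMultilinearMap
  let rows : ι → ι → R := fun i => M i
  -- `d s` is the coefficient of `t ^ #s` in the multilinear expansion of the determinant in the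
  -- rows; it vanishes as soon as two rows are replaced by `w`.
  let d : Finset ι → R := fun s => (∏ i ∈ s, v i) * f (s.piecewise (fun _ => w) rows)
  have hd : ∀ s : Finset ι, 2 ≤ s.card → d s = 0 := fun s hs => by
    obtain ⟨a, ha, b, hb, hab⟩ := Finset.one_lt_card.1 hs
    have : f (s.piecewise (fun _ => w) rows) = 0 :=
      detRowAlternating.map_eq_zero_of_eq _ (by simp [ha, hb]) hab
    simp [d, this]
  have hexpand : ∀ t, (M + t • vecMulVec v w).det = ∑ s, t ^ s.card * d s := fun t => by
    have hrows : M + t • vecMulVec v w = (fun i => (t * v i) • w) + rows := by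
      ext i j; simp [rows, vecMulVec_apply, mul_assoc, add_comm]
    change f _ = _
    rw [hrows, f.map_add_univ]
    refine Finset.sum_congr rfl fun s _ => ?_
    have : s.piecewise (fun i => (t * v i) • w) rows
        = s.piecewise (fun i => (t * v i) • s.piecewise (fun _ => w) rows i)
            (s.piecewise (fun _ => w) rows) := by
      ext i : 1; by_cases hi : i ∈ s <;> simp [hi]
    rw [this, f.map_piecewise_smul, Finset.prod_mul_distrib, Finset.prod_const]
    simp [d, mul_assoc]
  refine ⟨∑ s, if s.card = 0 then d s else 0, ∑ s, if s.card = 1 then d s else 0, fun t => ?_⟩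
  rw [hexpand, Finset.sum_mul, ← Finset.sum_add_distrib]
  refine Finset.sum_congr rfl fun s _ => ?_
  obtain h | h | h : s.card = 0 ∨ s.card = 1 ∨ 2 ≤ s.card := by omega
  · simp [h]
  · simp [h, mul_comm]
  · simp [hd s h]

theorem Matrix.transpose_mul_diagonal_single_mul (V : Matrix ι κ R) (j : ι) (t : R) :
    Vᵀ * diagonal (Pi.single j t) * V = t • vecMulVec (V j) (V j) := by
  ext a b
  simp [Matrix.mul_apply, vecMulVec_apply, diagonal_apply, Pi.single_apply]
  ring

theorem Matrix.transpose_mul_diagonal_update_mul (V : Matrix ι κ R) (u : ι → R) (j : ι) (t : R) :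
    Vᵀ * diagonal (Function.update u j t) * V =
      Vᵀ * diagonal (Function.update u j 0) * V + t • vecMulVec (V j) (V j) := by
  have hsplit : diagonal (Function.update u j t) =
      diagonal (Function.update u j 0) + diagonal (Pi.single j t) := by
    rw [diagonal_add]
    congr 1
    ext i; by_cases h : i = j <;> simp [h]
  rw [hsplit, Matrix.mul_add, Matrix.add_mul, transpose_mul_diagonal_single_mul]

theorem Matrix.isMultiaffine_det_transpose_mul_diagonal_mul [Fintype κ] [DecidableEq κ]
    (V : Matrix ι κ R) : IsMultiaffine fun u : ι → R => (Vᵀ * diagonal u * V).det := fun u j => by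
  obtain ⟨c₀, c₁, hc⟩ :=
    exists_det_add_smul_vecMulVec_eq (Vᵀ * diagonal (Function.update u j 0) * V) (V j) (V j)
  exact ⟨c₀, c₁, fun t => by dsimp only; rw [transpose_mul_diagonal_update_mul, hc]⟩

theorem Matrix.transpose_mul_diagonal_indicator_mul {m : Type*} [Fintype m] (V : Matrix ι κ R)
    (e : m ↪ ι) :
    Vᵀ * diagonal ((Set.range e).indicator (1 : ι → R)) * V =
      (V.submatrix e id)ᵀ * V.submatrix e id := by
  ext a b
  have : ∀ i, Vᵀ a i * ((Set.range e).indicator (1 : ι → R) i * V i b) =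
      (↑(Finset.univ.map e) : Set ι).indicator (fun i => V i a * V i b) i := fun i => by
    by_cases hi : i ∈ Set.range e <;> simp [hi, mul_comm]
  rw [Matrix.mul_assoc, mul_apply, mul_apply]
  simp only [diagonal_mul, this]
  rw [Finset.sum_indicator_subset _ (Finset.subset_univ _), Finset.sum_map]
  rfl

end GramDeterminant

theorem nontrivial_image_sq_of_three_lt_card {K : Type*} [Field K] [Fintype K]
    (h : 3 < Fintype.card K) : ((· ^ 2) '' {x : K | x ≠ 0}).Nontrivial := by
  classical
  obtain ⟨b, -, hb⟩ := Finset.exists_mem_notMem_of_card_lt_card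
    (s := ({0, 1, -1} : Finset K)) (t := Finset.univ) (Finset.card_le_three.trans_lt h)
  simp only [Finset.mem_insert, Finset.mem_singleton, not_or] at hb
  refine ⟨1, ⟨1, one_ne_zero, one_pow 2⟩, b ^ 2, ⟨b, hb.1, rfl⟩, ?_⟩
  rw [ne_comm, Ne, sq_eq_one_iff]
  exact not_or.2 hb.2

section GeneratorMatrix

variable {F ι : Type*} [Field F] [Fintype ι] [DecidableEq ι] {n : ℕ} (A : Matrix (Fin n) ι F)

theorem injective_mulVecLin_of_det_transpose_mul_ne_zero (h : (Aᵀ * A).det ≠ 0) :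
    Function.Injective A.mulVecLin := by
  rw [← LinearMap.ker_eq_bot, LinearMap.ker_eq_bot']
  intro v hv
  refine eq_zero_of_mulVec_eq_zero h ?_
  rw [← mulVec_mulVec, show A *ᵥ v = 0 from hv, mulVec_zero]

theorem finrank_range_mulVecLin_of_det_transpose_mul_ne_zero (h : (Aᵀ * A).det ≠ 0) :
    Module.finrank F (LinearMap.range A.mulVecLin) = Fintype.card ι := by
  rw [LinearMap.finrank_range_of_inj (injective_mulVecLin_of_det_transpose_mul_ne_zero A h),
    Module.finrank_fintype_fun_eq_card]

theorem isLCD_range_mulVecLin_of_det_transpose_mul_ne_zero (h : (Aᵀ * A).det ≠ 0) :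
    IsLCD (LinearMap.range A.mulVecLin) := by
  rw [IsLCD, eq_bot_iff]
  rintro _ ⟨⟨v, rfl⟩, hdual⟩
  suffices v = 0 by simp [this]
  refine eq_zero_of_mulVec_eq_zero h (funext fun b => ?_)
  have := hdual (A.mulVecLin (Pi.single b 1)) ⟨_, rfl⟩
  simp only [mulVecLin_apply, mulVec_single_one] at this
  rw [← mulVec_mulVec, ← vecMul_transpose, transpose_transpose]
  exact this

end GeneratorMatrix

section Weight

variable {F : Type*} [Field F] {n : ℕ}

open Classical in
theorem wt_add_card_filter_eq_zero (x : Fin n → F) :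
    wt x + (Finset.univ.filter (x · = 0)).card = n := by
  rw [wt, add_comm, Finset.card_filter_add_card_filter_not, Finset.card_univ, Fintype.card_fin]

variable {α : Fin n → F} (hα : Function.Injective α) {w : Fin n → F} (hw : ∀ i, w i ≠ 0)
include hα hw

theorem card_sub_natDegree_le_wt_mul_eval {p : F[X]} (hp : p ≠ 0) :
    n - p.natDegree ≤ wt fun i => w i * p.eval (α i) := by
  classical
  have hzeros : (Finset.univ.filter fun i => w i * p.eval (α i) = 0).card ≤ p.natDegree := by
    rw [← Finset.card_image_of_injective _ hα]
    refine card_le_degree_of_subset_roots fun x hx => ?_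
    obtain ⟨i, hi, rfl⟩ := Finset.mem_image.1 (Finset.mem_def.2 hx)
    simpa [mem_roots hp, hw i] using hi
  have := wt_add_card_filter_eq_zero fun i => w i * p.eval (α i)
  omega

theorem wt_mul_eval_prod_X_sub_C (s : Finset (Fin n)) :
    wt (fun i => w i * (∏ j ∈ s, (X - C (α j))).eval (α i)) = n - s.card := by
  classical
  have hzeros :
      (Finset.univ.filter fun i => w i * (∏ j ∈ s, (X - C (α j))).eval (α i) = 0) = s := by
    ext i
    simp [eval_prod, Finset.prod_eq_zero_iff, sub_eq_zero, hα.eq_iff, hw i]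
  have := wt_add_card_filter_eq_zero fun i => w i * (∏ j ∈ s, (X - C (α j))).eval (α i)
  rw [hzeros] at this
  omega

end Weight

section GRS

variable {F : Type*} [Field F] {n : ℕ}

/-- Generator matrix of the generalized Reed–Solomon code with evaluation points `α` and
column multipliers `w`. -/
def grsMatrix (α w : Fin n → F) (k : ℕ) : Matrix (Fin n) (Fin k) F :=
  of fun i a => w i * α i ^ (a : ℕ)

variable (α w : Fin n → F) (k : ℕ)

theorem grsMatrix_mulVec (v : Fin k → F) (i : Fin n) :
    (grsMatrix α w k *ᵥ v) i = w i * ((degreeLTEquiv F k).symm v : F[X]).eval (α i) := by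
  rw [eval_eq_sum_degreeLTEquiv (Submodule.coe_mem _), Subtype.coe_eta,
    LinearEquiv.apply_symm_apply, Finset.mul_sum]
  simp only [mulVec, dotProduct, grsMatrix, of_apply]
  exact Finset.sum_congr rfl fun a _ => by ring

theorem grsMatrix_eq_diagonal_mul : grsMatrix α w k = diagonal w * grsMatrix α 1 k := by
  ext i a
  simp [grsMatrix]

theorem transpose_grsMatrix_mul_self :
    (grsMatrix α w k)ᵀ * grsMatrix α w k =
      (grsMatrix α 1 k)ᵀ * diagonal (fun i => w i ^ 2) * grsMatrix α 1 k := by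
  rw [grsMatrix_eq_diagonal_mul, transpose_mul, diagonal_transpose, Matrix.mul_assoc,
    ← Matrix.mul_assoc (diagonal w), diagonal_mul_diagonal, ← Matrix.mul_assoc]
  simp only [sq]

theorem submatrix_grsMatrix_one (e : Fin k → Fin n) :
    (grsMatrix α 1 k).submatrix e id = vandermonde (α ∘ e) := by
  ext i a
  simp [grsMatrix, vandermonde]

theorem det_transpose_grsMatrix_one_mul_self :
    ((grsMatrix α w 1)ᵀ * grsMatrix α w 1).det = ∑ i, w i ^ 2 := by
  simp [det_unique, Matrix.mul_apply, grsMatrix, sq]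

variable {α w k}

theorem hasMinDist_range_grsMatrix (hα : Function.Injective α) (hw : ∀ i, w i ≠ 0)
    (hk1 : 1 ≤ k) (hk2 : k ≤ n) :
    hasMinDist (LinearMap.range (grsMatrix α w k).mulVecLin) (n - k + 1) := by
  have hcodeword : ∀ p : F[X]_k, (grsMatrix α w k).mulVecLin (degreeLTEquiv F k p) =
      fun i => w i * (p : F[X]).eval (α i) := fun p => by
    ext i; rw [mulVecLin_apply, grsMatrix_mulVec, LinearEquiv.symm_apply_apply]
  constructor
  · obtain ⟨s, -, hs⟩ := Finset.exists_subset_card_eq (s := (Finset.univ : Finset (Fin n)))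
      (n := k - 1) (by rw [Finset.card_univ, Fintype.card_fin]; omega)
    have hmem : ∏ j ∈ s, (X - C (α j)) ∈ F[X]_k := by
      have hne : ∏ j ∈ s, (X - C (α j)) ≠ 0 :=
        (monic_prod_of_monic _ _ fun j _ => monic_X_sub_C (α j)).ne_zero
      rw [mem_degreeLT, ← natDegree_lt_iff_degree_lt hne, natDegree_finsetProd_X_sub_C_eq_card]
      omega
    have hwt := wt_mul_eval_prod_X_sub_C hα hw s
    refine ⟨_, ⟨_, hcodeword ⟨_, hmem⟩⟩, fun h0 => ?_, by rw [hwt, hs]; omega⟩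
    rw [h0, show wt (0 : Fin n → F) = 0 by simp [wt]] at hwt
    omega
  · rintro _ ⟨v, rfl⟩ hv
    set p := (degreeLTEquiv F k).symm v
    have hp : (p : F[X]) ≠ 0 := fun h0 => hv (by
      rw [show v = degreeLTEquiv F k p from (LinearEquiv.apply_symm_apply _ v).symm,
        (Submodule.coe_eq_zero).1 h0, map_zero, map_zero])
    have hdeg : (p : F[X]).natDegree < k :=
      (natDegree_lt_iff_degree_lt hp).2 (mem_degreeLT.1 p.2)
    have hwt := card_sub_natDegree_le_wt_mul_eval hα hw hp
    rw [← hcodeword, LinearEquiv.apply_symm_apply] at hwt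
    omega

variable [Fintype F]

theorem exists_weights_det_ne_zero_of_three_lt_card (hF : 3 < Fintype.card F)
    (hα : Function.Injective α) (hk : k ≤ n) :
    ∃ w : Fin n → F, (∀ i, w i ≠ 0) ∧ ((grsMatrix α w k)ᵀ * grsMatrix α w k).det ≠ 0 := by
  set e := Fin.castLEEmb hk
  have hx₀ : ((grsMatrix α 1 k)ᵀ * diagonal ((Set.range e).indicator (1 : Fin n → F)) *
      grsMatrix α 1 k).det ≠ 0 := by
    rw [transpose_mul_diagonal_indicator_mul, submatrix_grsMatrix_one, det_mul, det_transpose]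
    exact mul_self_ne_zero.2 (det_vandermonde_ne_zero_iff.2 (hα.comp e.injective))
  obtain ⟨u, hu, hfu⟩ := (isMultiaffine_det_transpose_mul_diagonal_mul _).exists_forall_mem_ne_zero
    hx₀ (nontrivial_image_sq_of_three_lt_card hF)
  choose w hw hwu using hu
  refine ⟨w, hw, ?_⟩
  rwa [transpose_grsMatrix_mul_self, show (fun i => w i ^ 2) = u from funext hwu]

theorem exists_weights_det_ne_zero (hn : 2 * n = Fintype.card F + 1)
    (hα : Function.Injective α) (hk1 : 1 ≤ k) (hk2 : k ≤ n) :
    ∃ w : Fin n → F, (∀ i, w i ≠ 0) ∧ ((grsMatrix α w k)ᵀ * grsMatrix α w k).det ≠ 0 := by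
  rcases hk2.eq_or_lt with rfl | hkn
  · refine ⟨1, fun _ => one_ne_zero, ?_⟩
    have hV : grsMatrix α 1 k = vandermonde α := by simpa using submatrix_grsMatrix_one α k id
    rw [hV, det_mul, det_transpose]
    exact mul_self_ne_zero.2 (det_vandermonde_ne_zero_iff.2 hα)
  rcases hk1.eq_or_lt with rfl | hk
  · refine ⟨1, fun _ => one_ne_zero, ?_⟩
    have h2n : 2 * (n : F) = 1 := by
      simpa [FiniteField.cast_card_eq_zero] using congrArg (Nat.cast : ℕ → F) hn
    have hn0 : (n : F) ≠ 0 := fun h0 => by simp [h0] at h2n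
    rw [det_transpose_grsMatrix_one_mul_self]
    simpa using hn0
  exact exists_weights_det_ne_zero_of_three_lt_card (by omega) hα hk2

end GRS

theorem exists_mds_lcd_odd_half_general {F : Type*} [Field F] [Fintype F] {n k : ℕ}
    (hn : 2 * n = Fintype.card F + 1) (hk1 : 1 ≤ k) (hk2 : k ≤ n) :
    ∃ C : Submodule F (Fin n → F),
      Module.finrank F C = k ∧ IsLCD C ∧ hasMinDist C (n - k + 1) := by
  obtain ⟨α⟩ : Nonempty (Fin n ↪ F) := Function.Embedding.nonempty_of_card_le (by simp; omega)
  obtain ⟨w, hw, hdet⟩ := exists_weights_det_ne_zero hn α.injective hk1 hk2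
  refine ⟨LinearMap.range (grsMatrix α w k).mulVecLin, ?_,
    isLCD_range_mulVecLin_of_det_transpose_mul_ne_zero _ hdet,
    hasMinDist_range_grsMatrix α.injective hw hk1 hk2⟩
  simpa using finrank_range_mulVecLin_of_det_transpose_mul_ne_zero _ hdet

/-- For any odd prime power `q`, with `n = (q + 1) / 2`, and every `1 ≤ k ≤ n`,
there exists an MDS LCD `[n, k]` code over `F_q`. -/
theorem exists_mds_lcd_odd_half {F : Type*} [Field F] [Fintype F] {n k : ℕ}
    (hodd : Odd (Fintype.card F))
    (hn : 2 * n = Fintype.card F + 1) (hk1 : 1 ≤ k) (hk2 : k ≤ n) :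
    ∃ C : Submodule F (Fin n → F),
      Module.finrank F C = k ∧ IsLCD C ∧ hasMinDist C (n - k + 1) :=
  exists_mds_lcd_odd_half_general hn hk1 hk2
end

section
/- For any odd prime power q = r^2 that is a perfect square, and for any n with 2n ≤ r, for every k with 1 ≤ k ≤ n there exists an MDS LCD [n,k] code over F_q. -/
/-! Take `n` distinct nonzero points `a i` of the subfield `𝔽_r ⊆ 𝔽_q` (powers of an element
of order `r - 1`) and the generalized Reed–Solomon code of evaluations `(v i * f (a i))_i`,
`deg f < k`. It is MDS since a nonzero `f` has fewer than `k` roots. If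
`v i ^ 2 = a i ^ (n - k) / ∏_{j ≠ i} (a i - a j)`, then by Lagrange interpolation the pairing of
the codewords of `f` and `X ^ m` is the coefficient of `X ^ (n - 1)` in `X ^ (n - k + m) * f`;
for `m = k - 1 - deg f` this is the leading coefficient of `f`, so no nonzero codeword is
orthogonal to the whole code. Such `v i` exist because the right-hand side is fixed by
`x ↦ x ^ r`, hence lies in `𝔽_r`, and every element of `𝔽_r` is a square in `𝔽_{r²}` for odd `r`. -/

open Polynomial Finset Module

@[simp]
theorem wt_zero {R : Type*} [Zero R] {n : ℕ} : wt (0 : Fin n → R) = 0 := by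
  simp [wt]

section Singleton

variable {F : Type*} [Field F] {n : ℕ}

theorem exists_ne_zero_wt_le_of_finrank_pos (C : Submodule F (Fin n → F))
    (hC : 0 < finrank F C) : ∃ c ∈ C, c ≠ 0 ∧ wt c ≤ n - finrank F C + 1 := by
  classical
  have hCn : finrank F C ≤ n := by
    simpa using Submodule.finrank_le C
  set k := finrank F C
  have hkn : k - 1 ≤ n := by omega
  let π : (Fin n → F) →ₗ[F] Fin (k - 1) → F := LinearMap.funLeft F F (Fin.castLE hkn)
  have hker : LinearMap.ker (π ∘ₗ C.subtype) ≠ ⊥ :=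
    LinearMap.ker_ne_bot_of_finrank_lt (by rw [finrank_fin_fun]; omega)
  obtain ⟨c, hc, hc0⟩ := Submodule.ne_bot_iff _ |>.mp hker
  refine ⟨c, c.2, by simpa using hc0, ?_⟩
  have hsupp :
      ({i | (c : Fin n → F) i ≠ 0} : Finset (Fin n)) ⊆ (univ.map (Fin.castLEEmb hkn))ᶜ := by
    intro i hi
    simp only [mem_compl, mem_map, mem_univ, true_and, not_exists]
    rintro j rfl
    exact (mem_filter.mp hi).2 (congrFun hc j)
  calc wt (c : Fin n → F) ≤ #(univ.map (Fin.castLEEmb hkn))ᶜ := card_le_card hsupp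
    _ = n - (k - 1) := by
      rw [card_compl, card_map, card_univ, Fintype.card_fin, Fintype.card_fin]
    _ = n - k + 1 := by omega

theorem hasMinDist_of_le_wt {C : Submodule F (Fin n → F)} {k : ℕ} (hC : finrank F C = k)
    (hk : 0 < k) (h : ∀ c ∈ C, c ≠ 0 → n - k + 1 ≤ wt c) : hasMinDist C (n - k + 1) := by
  subst hC
  obtain ⟨c, hc, hc0, hwt⟩ := exists_ne_zero_wt_le_of_finrank_pos C hk
  exact ⟨⟨c, hc, hc0, le_antisymm hwt (h c hc hc0)⟩, h⟩

end Singleton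

section GRS

variable {F : Type*} [Field F] {n : ℕ}

noncomputable def grsEval (a v : Fin n → F) : F[X] →ₗ[F] Fin n → F :=
  LinearMap.pi fun i => v i • leval (a i)

/-- The generalized Reed–Solomon code `GRS_k(a, v)`. -/
noncomputable def grsCode (k : ℕ) (a v : Fin n → F) : Submodule F (Fin n → F) :=
  (degreeLT F k).map (grsEval a v)

variable {a v : Fin n → F} {k : ℕ}

@[simp]
theorem grsEval_apply (p : F[X]) (i : Fin n) : grsEval a v p i = v i * p.eval (a i) := rfl

theorem natDegree_lt_of_mem_degreeLT {p : F[X]} (hp : p ∈ degreeLT F k) (hp0 : p ≠ 0) :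
    p.natDegree < k :=
  (natDegree_lt_iff_degree_lt hp0).mpr (mem_degreeLT.mp hp)

theorem sub_natDegree_le_wt_grsEval (ha : Function.Injective a) (hv : ∀ i, v i ≠ 0)
    {p : F[X]} (hp : p ≠ 0) : n - p.natDegree ≤ wt (grsEval a v p) := by
  classical
  have hroots : #{i | p.eval (a i) = 0} ≤ p.natDegree := by
    rw [← card_image_of_injective _ ha]
    refine card_le_degree_of_subset_roots fun x hx => ?_
    simp only [mem_val, mem_image, mem_filter, mem_univ, true_and] at hx
    obtain ⟨i, hi, rfl⟩ := hx
    exact (mem_roots hp).mpr hi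
  have hsplit := card_filter_add_card_filter_not (s := univ) fun i => p.eval (a i) = 0
  have hwt : wt (grsEval a v p) = #{i | ¬ p.eval (a i) = 0} := by
    simp only [wt, grsEval_apply, ne_eq, mul_eq_zero, hv, false_or]
  rw [card_univ, Fintype.card_fin] at hsplit
  omega

theorem le_wt_of_mem_grsCode (ha : Function.Injective a) (hv : ∀ i, v i ≠ 0) (hk : k ≤ n)
    {c : Fin n → F} (hc : c ∈ grsCode k a v) (hc0 : c ≠ 0) : n - k + 1 ≤ wt c := by
  obtain ⟨p, hp, rfl⟩ := hc
  have hp0 : p ≠ 0 := by rintro rfl; exact hc0 (map_zero _)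
  have := natDegree_lt_of_mem_degreeLT hp hp0
  have := sub_natDegree_le_wt_grsEval ha hv hp0
  omega

theorem finrank_grsCode (ha : Function.Injective a) (hv : ∀ i, v i ≠ 0) (hk : k ≤ n) :
    finrank F (grsCode k a v) = k := by
  have hinj : Function.Injective ((grsEval a v).domRestrict (degreeLT F k)) := by
    rw [← LinearMap.ker_eq_bot, LinearMap.ker_eq_bot']
    rintro ⟨p, hp⟩ hp0
    by_contra hne
    have hp0' : p ≠ 0 := fun h => hne (Subtype.ext h)
    have hwt := sub_natDegree_le_wt_grsEval ha hv hp0'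
    have := natDegree_lt_of_mem_degreeLT hp hp0'
    rw [LinearMap.domRestrict_apply] at hp0
    rw [hp0, wt_zero] at hwt
    omega
  rw [grsCode, ← LinearMap.range_domRestrict, LinearMap.finrank_range_of_inj hinj,
    (degreeLTEquiv F k).finrank_eq, finrank_fin_fun]

theorem isLCD_grsCode (ha : Function.Injective a) (hk : k ≤ n)
    (hv : ∀ i, v i ^ 2 = a i ^ (n - k) / ∏ j ∈ univ.erase i, (a i - a j)) :
    IsLCD (grsCode k a v) := by
  classical
  rw [IsLCD, eq_bot_iff]
  rintro _ ⟨⟨f, hf, rfl⟩, hdual⟩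
  rw [Submodule.mem_bot]
  by_contra hne
  have hf0 : f ≠ 0 := by rintro rfl; exact hne (map_zero _)
  have hd := natDegree_lt_of_mem_degreeLT hf hf0
  set d := f.natDegree
  have hg : (X ^ (k - 1 - d) : F[X]) ∈ degreeLT F k := by
    rw [mem_degreeLT, degree_X_pow]; exact_mod_cast (by omega : k - 1 - d < k)
  set h : F[X] := X ^ (n - 1 - d) * f
  have hdeg : h.natDegree = n - 1 := by
    rw [natDegree_mul (pow_ne_zero _ X_ne_zero) hf0, natDegree_X_pow]; omega
  have hdegh : h.degree < #(univ : Finset (Fin n)) := by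
    rw [degree_eq_natDegree (by simp [h, hf0]), hdeg, card_univ, Fintype.card_fin]
    exact_mod_cast (by omega : n - 1 < n)
  have hlead : h.coeff (#(univ : Finset (Fin n)) - 1) = f.leadingCoeff := by
    rw [card_univ, Fintype.card_fin, ← hdeg]
    simp [h, leadingCoeff_mul]
  refine leadingCoeff_ne_zero.mpr hf0 ?_
  rw [← hlead, Lagrange.coeff_eq_sum ha.injOn hdegh, ← hdual _ ⟨_, hg, rfl⟩]
  refine sum_congr rfl fun i _ => ?_
  have hexp : n - 1 - d = (n - k) + (k - 1 - d) := by omega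
  simp only [grsEval_apply, h, eval_mul, eval_pow, eval_X, hexp, pow_add]
  linear_combination (-(a i ^ (k - 1 - d) * f.eval (a i))) * hv i

end GRS

section FiniteField

variable {F : Type*} [Field F] [Fintype F]

theorem exists_ringHom_eq_pow_of_dvd_card {r : ℕ} (hr : r ∣ Fintype.card F) :
    ∃ σ : F →+* F, ∀ x, σ x = x ^ r := by
  obtain ⟨p, hchar, m, hp, hcard⟩ := FiniteField.card' F
  have : Fact p.Prime := ⟨hp⟩
  obtain ⟨e, -, rfl⟩ := (Nat.dvd_prime_pow hp).mp (hcard ▸ hr)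
  exact ⟨iterateFrobenius F p e, iterateFrobenius_def p e⟩

theorem exists_injective_pow_eq_one {d n : ℕ} (hd : d ∣ Fintype.card F - 1) (hn : n ≤ d) :
    ∃ a : Fin n → F, Function.Injective a ∧ ∀ i, a i ^ d = 1 := by
  classical
  have hd0 : 0 < d := Nat.pos_of_dvd_of_pos hd (by have := Fintype.one_lt_card (α := F); omega)
  obtain ⟨ζ, hζ⟩ : ∃ ζ : Fˣ, orderOf ζ = d := by
    rw [← Fintype.card_units] at hd
    have := IsCyclic.card_orderOf_eq_totient hd
    simpa [← this, Finset.card_pos, Finset.Nonempty] using Nat.totient_pos.mpr hd0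
  refine ⟨fun i => ((ζ ^ (i : ℕ) : Fˣ) : F), fun i j hij => ?_, fun i => ?_⟩
  · exact Fin.ext (pow_injOn_Iio_orderOf (by simp only [hζ, Set.mem_Iio]; omega)
      (by simp only [hζ, Set.mem_Iio]; omega) (Units.val_injective hij))
  · rw [← Units.val_pow_eq_pow_val, ← pow_mul, mul_comm, pow_mul, ← hζ, pow_orderOf_eq_one,
      one_pow, Units.val_one]

theorem isSquare_of_pow_eq_self {r : ℕ} (hodd : Odd (Fintype.card F))
    (hq : Fintype.card F = r ^ 2) {w : F} (hw : w ^ r = w) : IsSquare w := by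
  rcases eq_or_ne w 0 with rfl | hw0
  · exact ⟨0, by simp⟩
  have hchar : ringChar F ≠ 2 := by
    rw [Ne, FiniteField.even_card_iff_char_two, ← Nat.even_iff, Nat.not_even_iff_odd]
    exact hodd
  obtain ⟨c, rfl⟩ : Odd r := (Nat.odd_pow_iff two_ne_zero).mp (hq ▸ hodd)
  have hw1 : w ^ (2 * c) = 1 := by
    rw [pow_succ] at hw
    exact (mul_eq_right₀ hw0).mp hw
  have hhalf : Fintype.card F / 2 = 2 * c * (c + 1) := by
    rw [hq, show (2 * c + 1) ^ 2 = 2 * (2 * c * (c + 1)) + 1 by ring]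
    omega
  rw [FiniteField.isSquare_iff hchar hw0, hhalf, pow_mul, hw1, one_pow]

end FiniteField

/-- For any odd prime power `q = r^2` which is a perfect square, and any `n` with
`2n ≤ r`, for every `1 ≤ k ≤ n` there exists an MDS LCD `[n, k]` code over `F_q`. -/
theorem exists_mds_lcd_square {F : Type*} [Field F] [Fintype F] {r n k : ℕ}
    (hodd : Odd (Fintype.card F))
    (hq : Fintype.card F = r ^ 2)
    (hn : 2 * n ≤ r) (hk1 : 1 ≤ k) (hk2 : k ≤ n) :
    ∃ C : Submodule F (Fin n → F),
      Module.finrank F C = k ∧ IsLCD C ∧ hasMinDist C (n - k + 1) := by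
  obtain ⟨a, ha, ha1⟩ := exists_injective_pow_eq_one (F := F) (d := r - 1) (n := n)
    (by simpa [hq] using Nat.sub_dvd_pow_sub_pow r 1 2) (by omega)
  have ha0 : ∀ i, a i ≠ 0 := fun i h => by
    simpa [h, zero_pow (by omega : r - 1 ≠ 0)] using ha1 i
  obtain ⟨σ, hσ⟩ := exists_ringHom_eq_pow_of_dvd_card (F := F) (r := r)
    (hq ▸ dvd_pow_self r two_ne_zero)
  have hfix : ∀ i, σ (a i) = a i := fun i => by
    rw [hσ, ← Nat.sub_add_cancel (by omega : 1 ≤ r), pow_succ, ha1, one_mul]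
  set w : Fin n → F := fun i => a i ^ (n - k) / ∏ j ∈ univ.erase i, (a i - a j)
  have hw0 : ∀ i, w i ≠ 0 := fun i =>
    div_ne_zero (pow_ne_zero _ (ha0 i)) <| prod_ne_zero_iff.mpr fun j hj =>
      sub_ne_zero.mpr (ha.ne (ne_of_mem_erase hj).symm)
  have hsq : ∀ i, IsSquare (w i) := fun i => isSquare_of_pow_eq_self hodd hq <| by
    simp only [w, ← hσ, map_div₀, map_pow, map_prod, map_sub, hfix]
  choose v hv using hsq
  have hv0 : ∀ i, v i ≠ 0 := fun i h => hw0 i (by rw [hv, h, mul_zero])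
  have hrank := finrank_grsCode ha hv0 hk2
  refine ⟨grsCode k a v, hrank, isLCD_grsCode ha hk2 fun i => by rw [sq, ← hv], ?_⟩
  exact hasMinDist_of_le_wt hrank hk1 fun c hc hc0 => le_wt_of_mem_grsCode ha hv0 hk2 hc hc0
end
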